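/- arXiv:2210.03236 — 4 statements merged into one kernel-verified Lean document; each statement's English description precedes it below -/
import Mathlib

section
/- Let q be a prime power, n ≥ 2, and let U ⊊ F_{q^n} be an F_q-linear subspace of dimension d_U ≥ 1 with ω(G_U) > d_U + 2. Let D_U be the greatest divisor d of n with 1 ≤ d ≤ d_U such that a²·F_{q^d} ⊆ U for some a ∈ F_{q^n}, a ≠ 0, where F_{q^d} denotes the subfield of F_{q^n} with q^d elements (such a d exists, namely d = 1). Then ω(G_U) = q^t + r for some integers t, r ≥ 0 with r + t ≤ d_U and 1 ≤ t ≤ κ_U := max{D_U, (7/8)·d_U + 7/(32·log₂ q)}. In particular, q^{D_U} ≤ ω(G_U) ≤ q^{κ_U} + d_U. -/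
/-- The Paley-like graph on a field `F` associated to a subset `S ⊆ F`:
distinct vertices `a, b ∈ F` are adjacent if and only if `a * b ∈ S`.
For an `F_q`-subspace `U`, the graph `G_U` of the paper is `paleyGraph (U : Set F)`. -/
def paleyGraph {F : Type*} [Field F] (S : Set F) : SimpleGraph F where
  Adj a b := a ≠ b ∧ a * b ∈ S
  symm := ⟨fun a b h => ⟨h.1.symm, mul_comm a b ▸ h.2⟩⟩
  loopless := ⟨fun a h => h.1 rfl⟩

/-! Let `C` be a maximum clique of `G_U`, `V = span C` and `W = {x ∈ V | x V ⊆ U}`. Maximality puts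
`W` inside `C`, and the elements of `C ∖ W` are linearly independent modulo `W` (multiply a relation
by one of them), so `ω = q^s + r` with `s = dim W`, `r + s ≤ dim V` and `W W ⊆ U`. Translating `V`
by a nonzero `c ∈ C` lands in `U + F_q c²`, so `dim V ≤ d_U + 1`, which forces `s ≥ 1`; taking
`c ∈ W` then gives `dim V ≤ d_U`.

If `3s ≥ 2 d_U + 2`, then `u = dim (W W) ≤ d_U` is small compared with `s`, so the spaces `W ∩ xW`
are large and any two of them meet: the ratios of `W` form a subfield `E`. Double counting the
pairs `(x, w)` with `x ∈ E`, `w, xw ∈ W` gives `dim E ≤ u`, hence `W W = w² E` for any `w ∈ W ∖ 0`.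
Then `w E` is a clique, so `q^{dim E} ≤ ω` and `dim E = s`: `E = F_{q^s}` and `s ≤ D`. Otherwise
`3s ≤ 2 d_U + 1`, whence `s ≤ 7 d_U / 8`. The clique `a F_{q^D}` gives `q^D ≤ ω`. -/

open Module Finset
open scoped Pointwise

section LinearAlgebra

variable {K M : Type*} [Field K] [AddCommGroup M] [Module K M]

theorem Submodule.exists_mem_ne_zero_of_finrank_pos {W : Submodule K M} (h : 0 < finrank K W) :
    ∃ w ∈ W, w ≠ 0 :=
  exists_mem_ne_zero_of_ne_bot fun hW => by rw [hW, finrank_bot] at h; exact lt_irrefl 0 h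

theorem Submodule.card_filter_mem_ne_zero [Fintype K] [Fintype M] [DecidableEq M]
    (P : Submodule K M) [DecidablePred (· ∈ P)] :
    #{x | x ∈ P ∧ x ≠ 0} = Fintype.card K ^ finrank K P - 1 := by
  rw [← card_eq_pow_finrank, Fintype.card_subtype, ← card_erase_of_mem (by simp : (0 : M) ∈ _)]
  congr 1
  ext x
  simp [and_comm]

variable [FiniteDimensional K M]

theorem Submodule.finrank_add_finrank_le_finrank_inf_add {A B C : Submodule K M}
    (hA : A ≤ C) (hB : B ≤ C) :
    finrank K A + finrank K B ≤ finrank K ↥(A ⊓ B) + finrank K C := by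
  have := finrank_sup_add_finrank_inf_eq A B
  have := finrank_mono (sup_le hA hB)
  omega

theorem Submodule.exists_mem_inf_ne_zero_of_finrank_lt {A B C : Submodule K M}
    (hA : A ≤ C) (hB : B ≤ C) (h : finrank K C < finrank K A + finrank K B) :
    ∃ z ∈ A ⊓ B, z ≠ 0 := by
  refine exists_mem_ne_zero_of_ne_bot fun hbot => ?_
  have := finrank_add_finrank_le_finrank_inf_add hA hB
  rw [hbot, finrank_bot] at this
  omega

theorem Submodule.card_add_finrank_le_of_sum_smul_mem {ι : Type*} [Fintype ι]
    {W V : Submodule K M} (hWV : W ≤ V) (v : ι → M) (hv : ∀ i, v i ∈ V)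
    (hind : ∀ g : ι → K, ∑ i, g i • v i ∈ W → ∀ i, g i = 0) :
    Fintype.card ι + finrank K W ≤ finrank K V := by
  set W' := W.comap V.subtype
  have hli : LinearIndependent K fun i => W'.mkQ ⟨v i, hv i⟩ := by
    refine Fintype.linearIndependent_iff.2 fun g hg => hind g ?_
    simp_rw [← map_smul, ← map_sum, mkQ_apply, Quotient.mk_eq_zero, W', mem_comap] at hg
    simpa using hg
  have hW' : finrank K W' = finrank K W :=
    LinearEquiv.finrank_eq (comapSubtypeEquivOfLe hWV)
  have := hli.fintype_card_le_finrank
  have := W'.finrank_quotient_add_finrank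
  omega

end LinearAlgebra

section RatioField

variable {K F : Type*} [Field K] [Field F] [Algebra K F]

namespace Submodule

theorem finrank_smul_of_ne_zero {a : F} (ha : a ≠ 0) (W : Submodule K F) :
    finrank K ↥(a • W) = finrank K W :=
  (LinearEquiv.finrank_eq (W.equivMapOfInjective _ (smul_right_injective F ha))).symm

theorem smul_le_mul_self {W : Submodule K F} {a : F} (ha : a ∈ W) : a • W ≤ W * W :=
  fun _ hy => by
    obtain ⟨z, hz, rfl⟩ := (mem_smul_pointwise_iff_exists _ _ _).1 hy
    exact mul_mem_mul ha hz

theorem finrank_le_finrank_mul_self [FiniteDimensional K F] {W : Submodule K F} {w : F}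
    (hw : w ∈ W) (hw0 : w ≠ 0) : finrank K W ≤ finrank K ↥(W * W) := by
  rw [← finrank_smul_of_ne_zero hw0 W]
  exact finrank_mono (smul_le_mul_self hw)

def ratioSet (W : Submodule K F) : Set F := {x | ∃ w ∈ W, w ≠ 0 ∧ x * w ∈ W}

variable {W : Submodule K F}

theorem inv_mem_ratioSet {x : F} (hx : x ∈ W.ratioSet) : x⁻¹ ∈ W.ratioSet := by
  obtain ⟨w, hw, hw0, hxw⟩ := hx
  rcases eq_or_ne x 0 with rfl | hx0
  · exact ⟨w, hw, hw0, by simp⟩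
  · exact ⟨x * w, hxw, mul_ne_zero hx0 hw0, by rwa [inv_mul_cancel_left₀ hx0]⟩

theorem algebraMap_mem_ratioSet (hW : 2 * finrank K ↥(W * W) < 3 * finrank K W) (c : K) :
    algebraMap K F c ∈ W.ratioSet := by
  obtain ⟨w, hw, hw0⟩ := exists_mem_ne_zero_of_finrank_pos (by omega : 0 < finrank K W)
  exact ⟨w, hw, hw0, by rw [← Algebra.smul_def]; exact W.smul_mem c hw⟩

variable [FiniteDimensional K F]

theorem two_mul_finrank_le_finrank_inf_smul_add {x : F} (hx : x ∈ W.ratioSet) (hx0 : x ≠ 0) :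
    2 * finrank K W ≤ finrank K ↥(W ⊓ x • W) + finrank K ↥(W * W) := by
  obtain ⟨w, hw, hw0, hxw⟩ := hx
  have hinf : w • W ⊓ (x * w) • W ≤ w • (W ⊓ x • W) := by
    intro z hz
    obtain ⟨hz₁, hz₂⟩ := mem_inf.1 hz
    rw [mem_smul_iff_inv_mul_mem hw0] at hz₁ ⊢
    rw [mem_smul_iff_inv_mul_mem (mul_ne_zero hx0 hw0)] at hz₂
    refine mem_inf.2 ⟨hz₁, (mem_smul_iff_inv_mul_mem hx0).2 ?_⟩
    rwa [← mul_assoc, ← mul_inv]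
  have h := finrank_add_finrank_le_finrank_inf_add (smul_le_mul_self hw) (smul_le_mul_self hxw)
  have := finrank_mono hinf
  rw [finrank_smul_of_ne_zero hw0, finrank_smul_of_ne_zero (mul_ne_zero hx0 hw0)] at h
  rw [finrank_smul_of_ne_zero hw0] at this
  omega

theorem mul_mem_ratioSet (hW : 2 * finrank K ↥(W * W) < 3 * finrank K W) {x y : F}
    (hx : x ∈ W.ratioSet) (hy : y ∈ W.ratioSet) : x * y ∈ W.ratioSet := by
  rcases eq_or_ne x 0 with rfl | hx0
  · simpa using hx
  rcases eq_or_ne y 0 with rfl | hy0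
  · simpa using hy
  have hx' := two_mul_finrank_le_finrank_inf_smul_add hx hx0
  have hy' := two_mul_finrank_le_finrank_inf_smul_add hy hy0
  have hB : x • (W ⊓ y • W) ≤ x • W := map_mono inf_le_left
  obtain ⟨z, hz, hz0⟩ := exists_mem_inf_ne_zero_of_finrank_lt (A := W ⊓ x • W) inf_le_right hB
    (by rw [finrank_smul_of_ne_zero hx0, finrank_smul_of_ne_zero hx0]; omega)
  obtain ⟨⟨hzW, -⟩, hzxy⟩ := mem_inf.1 hz
  obtain ⟨-, hzy⟩ := mem_inf.1 ((mem_smul_iff_inv_mul_mem hx0).1 hzxy)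
  refine ⟨y⁻¹ * (x⁻¹ * z), (mem_smul_iff_inv_mul_mem hy0).1 hzy, by simp [hx0, hy0, hz0], ?_⟩
  rwa [mul_assoc, mul_inv_cancel_left₀ hy0, mul_inv_cancel_left₀ hx0]

theorem add_mem_ratioSet (hW : 2 * finrank K ↥(W * W) < 3 * finrank K W) {x y : F}
    (hx : x ∈ W.ratioSet) (hy : y ∈ W.ratioSet) : x + y ∈ W.ratioSet := by
  rcases eq_or_ne x 0 with rfl | hx0
  · simpa using hy
  rcases eq_or_ne y 0 with rfl | hy0
  · simpa using hx
  have hx' := two_mul_finrank_le_finrank_inf_smul_add (inv_mem_ratioSet hx) (inv_ne_zero hx0)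
  have hy' := two_mul_finrank_le_finrank_inf_smul_add (inv_mem_ratioSet hy) (inv_ne_zero hy0)
  obtain ⟨z, hz, hz0⟩ := exists_mem_inf_ne_zero_of_finrank_lt (A := W ⊓ x⁻¹ • W)
    (B := W ⊓ y⁻¹ • W) inf_le_left inf_le_left (by omega)
  simp only [mem_inf] at hz
  obtain ⟨⟨hzW, hxz⟩, -, hyz⟩ := hz
  rw [mem_smul_iff_inv_mul_mem (inv_ne_zero hx0), inv_inv] at hxz
  rw [mem_smul_iff_inv_mul_mem (inv_ne_zero hy0), inv_inv] at hyz
  exact ⟨z, hzW, hz0, by rw [add_mul]; exact add_mem hxz hyz⟩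

def ratioField (W : Submodule K F) (hW : 2 * finrank K ↥(W * W) < 3 * finrank K W) :
    IntermediateField K F where
  carrier := W.ratioSet
  mul_mem' := mul_mem_ratioSet hW
  add_mem' := add_mem_ratioSet hW
  algebraMap_mem' := algebraMap_mem_ratioSet hW
  inv_mem' _ := inv_mem_ratioSet

theorem le_smul_ratioField (hW : 2 * finrank K ↥(W * W) < 3 * finrank K W) {w : F}
    (hw : w ∈ W) (hw0 : w ≠ 0) :
    W ≤ w • Subalgebra.toSubmodule (W.ratioField hW).toSubalgebra := fun _ hy =>
  (mem_smul_iff_inv_mul_mem hw0).2 ⟨w, hw, hw0, by rwa [mul_comm, mul_inv_cancel_left₀ hw0]⟩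

theorem mul_self_le_smul_ratioField (hW : 2 * finrank K ↥(W * W) < 3 * finrank K W) {w : F}
    (hw : w ∈ W) (hw0 : w ≠ 0) :
    W * W ≤ (w * w) • Subalgebra.toSubmodule (W.ratioField hW).toSubalgebra := by
  refine mul_le.2 fun a ha b hb => (mem_smul_iff_inv_mul_mem (mul_ne_zero hw0 hw0)).2 ?_
  have hab := (W.ratioField hW).mul_mem
    ((mem_smul_iff_inv_mul_mem hw0).1 (le_smul_ratioField hW hw hw0 ha))
    ((mem_smul_iff_inv_mul_mem hw0).1 (le_smul_ratioField hW hw hw0 hb))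
  rw [mul_inv, mul_mul_mul_comm]
  exact hab

end Submodule

end RatioField

/-- Double counting of the pairs `(x, w)` with `x ∈ P`, `w ∈ W` nonzero and `x * w ∈ W`: there are
at most `(q ^ dim W - 1) ^ 2` of them, since `(x, w) ↦ (x * w, w)` is injective. -/
theorem Submodule.pow_finrank_sub_one_mul_le {K F : Type*} [Field K] [Field F] [Algebra K F]
    [Fintype K] [Fintype F] (W P : Submodule K F) (k : ℕ)
    (hk : ∀ x ∈ P, x ≠ 0 → k ≤ finrank K ↥(W ⊓ x⁻¹ • W)) :
    (Fintype.card K ^ finrank K P - 1) * (Fintype.card K ^ k - 1) ≤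
      (Fintype.card K ^ finrank K W - 1) ^ 2 := by
  classical
  rw [← card_filter_mem_ne_zero, sq, ← card_filter_mem_ne_zero]
  refine card_mul_le_card_mul (fun x w => x * w ∈ W) (fun x hx => ?_) (fun w hw => ?_)
  · obtain ⟨hxP, hx0⟩ := (mem_filter.1 hx).2
    calc Fintype.card K ^ k - 1
        ≤ Fintype.card K ^ finrank K ↥(W ⊓ x⁻¹ • W) - 1 :=
          Nat.sub_le_sub_right (Nat.pow_le_pow_right Fintype.card_pos (hk x hxP hx0)) 1
      _ = #{w | w ∈ W ⊓ x⁻¹ • W ∧ w ≠ 0} := (card_filter_mem_ne_zero _).symm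
      _ ≤ _ := card_le_card fun w hw => by
          simp only [mem_filter, mem_univ, true_and, mem_inf, bipartiteAbove] at hw ⊢
          rw [mem_smul_iff_inv_mul_mem (inv_ne_zero hx0), inv_inv] at hw
          exact ⟨⟨hw.1.1, hw.2⟩, hw.1.2⟩
  · obtain ⟨-, hw0⟩ := (mem_filter.1 hw).2
    refine card_le_card_of_injOn (· * w) (fun x hx => ?_)
      (fun x _ y _ h => mul_right_cancel₀ hw0 h)
    simp only [bipartiteBelow, coe_filter, mem_filter, mem_univ, true_and,
      Set.mem_ofPred_eq] at hx ⊢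
    exact ⟨hx.2, mul_ne_zero hx.1.2 hw0⟩

theorem sq_pow_sub_one_lt_mul {q a b s : ℕ} (hq : 2 ≤ q) (ha : 1 ≤ a) (hb : 1 ≤ b)
    (hab : a + b = 2 * s + 1) : (q ^ s - 1) ^ 2 < (q ^ a - 1) * (q ^ b - 1) := by
  obtain ⟨a, rfl⟩ := Nat.exists_eq_add_of_le' ha
  obtain ⟨b, rfl⟩ := Nat.exists_eq_add_of_le' hb
  have hZ : (q ^ s) ^ 2 = q * (q ^ a * q ^ b) := by
    rw [← pow_mul, ← pow_add, ← pow_succ']; congr 1; omega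
  have hX := Nat.one_le_pow a q (by omega)
  have hY := Nat.one_le_pow b q (by omega)
  have hqZ : q ≤ q ^ s := Nat.le_self_pow (by omega) q
  rw [pow_succ' q a, pow_succ' q b]
  zify [hqZ.trans' (by omega : 1 ≤ q), (by nlinarith : 1 ≤ q * q ^ a),
    (by nlinarith : 1 ≤ q * q ^ b)]
  have hZ' : ((q : ℤ) ^ s) ^ 2 = q * (q ^ a * q ^ b) := by exact_mod_cast hZ
  have hq' : (2 : ℤ) ≤ q := by exact_mod_cast hq
  have hX' : (1 : ℤ) ≤ q ^ a := by exact_mod_cast hX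
  have hY' : (1 : ℤ) ≤ q ^ b := by exact_mod_cast hY
  have hqZ' : (q : ℤ) ≤ q ^ s := by exact_mod_cast hqZ
  -- with `X = q ^ a`, `Y = q ^ b`, the difference of the two sides is
  -- `q (X - 1) (Y - 1) + q X Y (q - 2) + (2 q ^ s - q)`
  nlinarith [mul_nonneg (mul_nonneg (by positivity : (0 : ℤ) ≤ q) (sub_nonneg.2 hX'))
      (sub_nonneg.2 hY'),
    mul_nonneg (mul_nonneg (by positivity : (0 : ℤ) ≤ q) (by positivity : (0 : ℤ) ≤ q ^ a * q ^ b))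
      (sub_nonneg.2 hq')]

theorem Submodule.finrank_ratioField_le {K F : Type*} [Field K] [Field F] [Algebra K F]
    [Fintype K] [Fintype F] {W : Submodule K F} (hW : 2 * finrank K ↥(W * W) < 3 * finrank K W) :
    finrank K (W.ratioField hW) ≤ finrank K ↥(W * W) := by
  obtain ⟨w, hw, hw0⟩ := exists_mem_ne_zero_of_finrank_pos (by omega : 0 < finrank K W)
  have hsu := finrank_le_finrank_mul_self hw hw0
  have hcount := pow_finrank_sub_one_mul_le W
    (Subalgebra.toSubmodule (W.ratioField hW).toSubalgebra) (2 * finrank K W - finrank K ↥(W * W))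
    fun x hx hx0 => by
      have := two_mul_finrank_le_finrank_inf_smul_add (inv_mem_ratioSet hx) (inv_ne_zero hx0)
      omega
  change (_ ^ finrank K (W.ratioField hW) - 1) * _ ≤ _ at hcount
  by_contra! h
  have hlt := sq_pow_sub_one_lt_mul (Fintype.one_lt_card : 2 ≤ Fintype.card K)
    (a := finrank K ↥(W * W) + 1) (b := 2 * finrank K W - finrank K ↥(W * W)) (s := finrank K W)
    (by omega) (by omega) (by omega)
  have hle := Nat.mul_le_mul_right (Fintype.card K ^ (2 * finrank K W - finrank K ↥(W * W)) - 1)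
    (Nat.sub_le_sub_right (Nat.pow_le_pow_right (Fintype.card_pos (α := K)) h) 1)
  exact lt_irrefl _ (hlt.trans_le (hle.trans hcount))

section FiniteField

variable {K F : Type*} [Field K] [Field F] [Algebra K F]

theorem IntermediateField.mem_iff_pow_natCard_eq [Finite F] (E : IntermediateField K F) (x : F) :
    x ∈ E ↔ x ^ Nat.card E = x := by
  have := Fintype.ofFinite E
  rw [Nat.card_eq_fintype_card]
  refine ⟨fun hx => congrArg Subtype.val (FiniteField.pow_card (⟨x, hx⟩ : E)), fun hx => ?_⟩
  have hE : 1 < Fintype.card E := Fintype.one_lt_card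
  -- `X ^ #E - X` has all of `E` as roots, hence no others in `F`
  have hroots := Polynomial.roots_map_of_injective_of_card_eq_natDegree
    (algebraMap E F).injective (p := Polynomial.X ^ Fintype.card E - Polynomial.X) (by
      rw [FiniteField.roots_X_pow_card_sub_X, FiniteField.X_pow_card_sub_X_natDegree_eq _ hE]
      rfl)
  have hx' : x ∈ (Polynomial.map (algebraMap E F)
      (Polynomial.X ^ Fintype.card E - Polynomial.X)).roots := by
    rw [Polynomial.mem_roots (Polynomial.map_ne_zero (FiniteField.X_pow_card_sub_X_ne_zero E hE))]
    simp [hx]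
  rw [← hroots, FiniteField.roots_X_pow_card_sub_X] at hx'
  obtain ⟨y, -, rfl⟩ := Multiset.mem_map.1 hx'
  exact y.2

theorem IntermediateField.mem_iff_pow_card_pow_finrank_eq [Fintype K] [Finite F]
    (E : IntermediateField K F) (x : F) : x ∈ E ↔ x ^ Fintype.card K ^ finrank K E = x := by
  rw [mem_iff_pow_natCard_eq, Module.natCard_eq_pow_finrank (K := K), Nat.card_eq_fintype_card]

theorem IntermediateField.exists_finrank_eq [Finite F] {d : ℕ} (hd : d ≠ 0)
    (hdF : d ∣ finrank K F) : ∃ E : IntermediateField K F, finrank K E = d := by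
  have := Finite.of_injective _ (algebraMap K F).injective
  obtain ⟨p, hp⟩ := CharP.exists K
  have := Fact.mk (CharP.char_is_prime K p)
  have := NeZero.mk hd
  obtain ⟨f⟩ := FiniteField.nonempty_algHom_of_finrank_dvd
    (K := FiniteField.Extension K p d) (L := F) (by rwa [FiniteField.finrank_extension])
  exact ⟨f.fieldRange, (AlgEquiv.ofInjectiveField f).toLinearEquiv.finrank_eq.symm.trans
    (FiniteField.finrank_extension K p d)⟩

end FiniteField

section PaleyGraph

variable {K F : Type*} [Field K] [Field F] [Algebra K F]

theorem paleyGraph_isClique_iff {S T : Set F} :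
    (paleyGraph S).IsClique T ↔ T.Pairwise fun a b => a * b ∈ S :=
  ⟨fun h => h.mono' fun _ _ hab => hab.2, fun h _ ha _ hb hab => ⟨hab, h ha hb hab⟩⟩

theorem natCard_le_cliqueNum_of_sq_mul_mem [Finite F] {S : Set F} (E : IntermediateField K F)
    {a : F} (ha : a ≠ 0) (h : ∀ x ∈ E, a ^ 2 * x ∈ S) :
    Nat.card E ≤ (paleyGraph S).cliqueNum := by
  classical
  have := Fintype.ofFinite F
  have hclique : (paleyGraph S).IsClique ↑(({x | x ∈ E} : Finset F).image (a * ·)) := by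
    refine paleyGraph_isClique_iff.2 ?_
    simp only [coe_image, coe_filter, mem_univ, true_and]
    rintro _ ⟨x, hx, rfl⟩ _ ⟨y, hy, rfl⟩ -
    rw [show a * x * (a * y) = a ^ 2 * (x * y) by ring]
    exact h _ (mul_mem hx hy)
  have hcard := hclique.card_le_cliqueNum
  rwa [card_image_of_injective _ (mul_right_injective₀ ha), ← Fintype.card_subtype,
    ← Nat.card_eq_fintype_card] at hcard

theorem pow_le_cliqueNum_of_sq_mul_mem [Fintype K] [Fintype F] {S : Set F} {d : ℕ} (hd : d ≠ 0)
    (hdF : d ∣ finrank K F) {a : F} (ha : a ≠ 0)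
    (h : ∀ x : F, x ^ Fintype.card K ^ d = x → a ^ 2 * x ∈ S) :
    Fintype.card K ^ d ≤ (paleyGraph S).cliqueNum := by
  obtain ⟨E, rfl⟩ := IntermediateField.exists_finrank_eq hd hdF
  rw [← Nat.card_eq_fintype_card (α := K), ← Module.natCard_eq_pow_finrank]
  exact natCard_le_cliqueNum_of_sq_mul_mem E ha fun x hx =>
    h x ((E.mem_iff_pow_card_pow_finrank_eq x).1 hx)

def Submodule.mulCore (U V : Submodule K F) : Submodule K F where
  carrier := {x | x ∈ V ∧ ∀ y ∈ V, x * y ∈ U}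
  add_mem' hx hy :=
    ⟨add_mem hx.1 hy.1, fun z hz => by rw [add_mul]; exact add_mem (hx.2 z hz) (hy.2 z hz)⟩
  zero_mem' := ⟨zero_mem V, fun z _ => by rw [zero_mul]; exact zero_mem U⟩
  smul_mem' c x hx :=
    ⟨V.smul_mem c hx.1, fun z hz => by rw [smul_mul_assoc]; exact U.smul_mem c (hx.2 z hz)⟩

namespace Submodule

variable {U : Submodule K F} {C : Set F}

theorem mem_mulCore_span_iff {x : F} :
    x ∈ U.mulCore (span K C) ↔ x ∈ span K C ∧ ∀ c ∈ C, x * c ∈ U := by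
  refine ⟨fun hx => ⟨hx.1, fun c hc => hx.2 c (subset_span hc)⟩, fun ⟨hx, h⟩ => ⟨hx, ?_⟩⟩
  have : span K C ≤ U.comap (LinearMap.mulLeft K x) := span_le.2 h
  exact fun y hy => this hy

theorem mem_mulCore_span_iff_mul_self_mem (hC : (paleyGraph (U : Set F)).IsClique C) {c : F}
    (hc : c ∈ C) : c ∈ U.mulCore (span K C) ↔ c * c ∈ U := by
  rw [mem_mulCore_span_iff]
  refine ⟨fun h => h.2 c hc, fun h => ⟨subset_span hc, fun c' hc' => ?_⟩⟩
  rcases eq_or_ne c c' with rfl | hne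
  · exact h
  · exact paleyGraph_isClique_iff.1 hC hc hc' hne

theorem finrank_span_le_finrank_sup [FiniteDimensional K F]
    (hC : (paleyGraph (U : Set F)).IsClique C) {c : F} (hc : c ∈ C) (hc0 : c ≠ 0) :
    finrank K (span K C) ≤ finrank K ↥(U ⊔ K ∙ (c * c)) := by
  rw [← finrank_smul_of_ne_zero hc0]
  refine finrank_mono fun z hz => ?_
  obtain ⟨y, hy, rfl⟩ := (mem_smul_pointwise_iff_exists _ _ _).1 hz
  have : span K C ≤ (U ⊔ K ∙ (c * c)).comap (LinearMap.mulLeft K c) := by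
    refine span_le.2 fun c' hc' => ?_
    rcases eq_or_ne c c' with rfl | hne
    · exact mem_sup_right (mem_span_singleton_self _)
    · exact mem_sup_left (paleyGraph_isClique_iff.1 hC hc hc' hne)
  exact this hy

theorem card_add_finrank_mulCore_le [FiniteDimensional K F]
    (hC : (paleyGraph (U : Set F)).IsClique C) (R : Finset F) (hRC : ↑R ⊆ C)
    (hRW : ∀ c ∈ R, c ∉ U.mulCore (span K C)) :
    #R + finrank K (U.mulCore (span K C)) ≤ finrank K (span K C) := by
  classical
  rw [← Fintype.card_coe R]
  refine card_add_finrank_le_of_sum_smul_mem (fun x hx => hx.1) (fun c : R => (c : F))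
    (fun c => subset_span (hRC c.2)) fun g hg j => by_contra fun hj => ?_
  -- multiplying the combination by `c_j` kills every term but `g j • c_j * c_j` modulo `U`
  have hmul : ∑ i, g i • ((i : F) * j) ∈ U := by
    simpa only [sum_mul, smul_mul_assoc] using hg.2 j (subset_span (hRC j.2))
  have hrest : ∑ i ∈ univ.erase j, g i • ((i : F) * j) ∈ U := sum_mem fun i hi =>
    U.smul_mem _ (paleyGraph_isClique_iff.1 hC (hRC i.2) (hRC j.2)
      fun h => (mem_erase.1 hi).1 (Subtype.ext h))
  rw [← add_sum_erase _ _ (mem_univ j)] at hmul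
  have hjj : (j : F) * j ∈ U := (U.smul_mem_iff hj).1 ((add_mem_cancel_right hrest).1 hmul)
  exact hRW j j.2 ((mem_mulCore_span_iff_mul_self_mem hC (hRC j.2)).2 hjj)

theorem mulCore_subset_of_isMaximumClique [Finite F] {C : Finset F}
    (hC : (paleyGraph (U : Set F)).IsMaximumClique C) :
    (U.mulCore (span K (C : Set F)) : Set F) ⊆ C := by
  set W := U.mulCore (span K (C : Set F))
  have hW : ∀ a ∈ W, ∀ b ∈ (C : Set F) ∪ W, a * b ∈ U := fun a ha b hb =>
    ha.2 b (hb.elim (fun hb => subset_span hb) fun hb => hb.1)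
  have hclique : (paleyGraph (U : Set F)).IsClique ((C : Set F) ∪ W) := by
    refine paleyGraph_isClique_iff.2 fun a ha b hb hab => ?_
    rcases hb with hbC | hbW
    · rcases ha with haC | haW
      · exact paleyGraph_isClique_iff.1 hC.isClique haC hbC hab
      · exact hW a haW b (Or.inl hbC)
    · rw [mul_comm]
      exact hW b hbW a ha
  exact (Set.union_subset_iff.1 ((hC.isMaximalClique _).2 hclique Set.subset_union_left)).2

end Submodule

end PaleyGraph

section CliqueNumber

variable {K F : Type*} [Field K] [Field F] [Algebra K F] [Fintype K] [Fintype F]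

open Submodule

theorem exists_cliqueNum_eq_pow_finrank_add {U : Submodule K F}
    (hbig : finrank K U + 2 < (paleyGraph (U : Set F)).cliqueNum) :
    ∃ W : Submodule K F, W * W ≤ U ∧ 1 ≤ finrank K W ∧ ∃ r : ℕ,
      (paleyGraph (U : Set F)).cliqueNum = Fintype.card K ^ finrank K W + r ∧
      r + finrank K W ≤ finrank K U := by
  classical
  obtain ⟨C, hC⟩ := (paleyGraph (U : Set F)).maximumClique_exists
  rw [← SimpleGraph.maximumClique_card_eq_cliqueNum C hC] at hbig ⊢
  set W := U.mulCore (span K (C : Set F))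
  have hWC := mulCore_subset_of_isMaximumClique hC
  have hcard : #C = Fintype.card K ^ finrank K W + #{c ∈ C | c ∉ W} := by
    rw [← card_filter_add_card_filter_not (s := C) (· ∈ W), ← card_eq_pow_finrank,
      Fintype.card_subtype]
    congr 2
    ext x
    simpa using fun hx => hWC hx
  have hR : #{c ∈ C | c ∉ W} + finrank K W ≤ finrank K (span K (C : Set F)) :=
    card_add_finrank_mulCore_le hC.isClique _ (coe_subset.2 (filter_subset _ _))
      fun c hc => (mem_filter.1 hc).2
  obtain ⟨c, hc, hc0⟩ := exists_mem_ne (by omega : 1 < #C) 0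
  have hs : 1 ≤ finrank K W := by
    by_contra! h0
    have := finrank_span_le_finrank_sup hC.isClique hc hc0
    have := finrank_add_le_finrank_add_finrank U (K ∙ (c * c))
    rw [finrank_span_singleton (mul_ne_zero hc0 hc0)] at this
    rw [Nat.lt_one_iff.1 h0, pow_zero] at hcard
    omega
  obtain ⟨w, hw, hw0⟩ := exists_mem_ne_zero_of_finrank_pos hs
  have hV := finrank_span_le_finrank_sup hC.isClique (hWC hw) hw0
  rw [sup_eq_left.2 ((span_singleton_le_iff_mem _ _).2 (hw.2 w hw.1))] at hV
  exact ⟨W, mul_le.2 fun a ha b hb => ha.2 b hb.1, hs, _, hcard, by omega⟩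

theorem le_of_pow_le_pow_add {q h s r : ℕ} (hq : 2 ≤ q) (hr : r < q ^ s)
    (hle : q ^ h ≤ q ^ s + r) : h ≤ s := by
  by_contra! hlt
  have := Nat.pow_le_pow_right (by omega : 0 < q) hlt
  rw [pow_succ] at this
  nlinarith

theorem exists_intermediateField_sq_mul_mem {U W : Submodule K F} (hWU : W * W ≤ U) {r : ℕ}
    (hω : (paleyGraph (U : Set F)).cliqueNum = Fintype.card K ^ finrank K W + r)
    (hr : r + finrank K W ≤ finrank K U) (h3 : 2 * finrank K U + 2 ≤ 3 * finrank K W) :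
    ∃ E : IntermediateField K F, finrank K E = finrank K W ∧
      ∃ a : F, a ≠ 0 ∧ ∀ x ∈ E, a ^ 2 * x ∈ U := by
  have hW : 2 * finrank K ↥(W * W) < 3 * finrank K W := by
    have := finrank_mono hWU
    omega
  obtain ⟨w, hw, hw0⟩ := exists_mem_ne_zero_of_finrank_pos (by omega : 0 < finrank K W)
  set E := W.ratioField hW
  -- `W * W ≤ w² E`, and the two have the same dimension
  have hEU : (w * w) • Subalgebra.toSubmodule E.toSubalgebra ≤ U := by
    rwa [← eq_of_le_of_finrank_le (mul_self_le_smul_ratioField hW hw hw0)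
      (by rw [finrank_smul_of_ne_zero (mul_ne_zero hw0 hw0)]; exact finrank_ratioField_le hW)]
  have hEU' : ∀ x ∈ E, w ^ 2 * x ∈ U := fun x hx => by
    rw [sq]
    exact hEU (smul_mem_pointwise_smul x _ _ hx)
  have hsE : finrank K W ≤ finrank K E := by
    have := finrank_mono (le_smul_ratioField hW hw hw0)
    rwa [finrank_smul_of_ne_zero hw0] at this
  have hEs : finrank K E ≤ finrank K W := by
    have hq : 2 ≤ Fintype.card K := Fintype.one_lt_card
    have hcl := natCard_le_cliqueNum_of_sq_mul_mem E hw0 hEU'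
    rw [Module.natCard_eq_pow_finrank (K := K), Nat.card_eq_fintype_card, hω] at hcl
    exact le_of_pow_le_pow_add hq ((by omega : r < finrank K W).trans (Nat.lt_pow_self hq)) hcl
  exact ⟨E, le_antisymm hEs hsE, w, hw0, hEU'⟩

end CliqueNumber

theorem natCast_le_max_of_le_or_eight_mul_le {s D d : ℕ} {c : ℝ} (hc : 0 ≤ c)
    (h : s ≤ D ∨ 8 * s ≤ 7 * d) : (s : ℝ) ≤ max (D : ℝ) (7 / 8 * d + c) := by
  rcases h with h | h
  · exact le_max_of_le_left (by exact_mod_cast h)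
  · have : (8 * s : ℝ) ≤ 7 * d := by exact_mod_cast h
    exact le_max_of_le_right (by linarith)

theorem natCast_pow_add_le_rpow_add {q s r d : ℕ} {κ : ℝ} (hq : 1 ≤ q) (hs : (s : ℝ) ≤ κ)
    (hr : r ≤ d) : ((q ^ s + r : ℕ) : ℝ) ≤ (q : ℝ) ^ κ + d := by
  push_cast
  gcongr
  rw [← Real.rpow_natCast]
  exact Real.rpow_le_rpow_of_exponent_le (by exact_mod_cast hq) hs

theorem omega_bounds_of_large_general (q n : ℕ)
    (K F : Type*) [Field K] [Field F] [Algebra K F] [Fintype K] [Fintype F]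
    (hK : Fintype.card K = q) (hF : Fintype.card F = q ^ n)
    (U : Submodule K F)
    (hbig : Module.finrank K U + 2 < (paleyGraph (U : Set F)).cliqueNum)
    (D : ℕ)
    (hD : IsGreatest {d : ℕ | d ∣ n ∧ 1 ≤ d ∧ d ≤ Module.finrank K U ∧
      ∃ a : F, a ≠ 0 ∧ ∀ x : F, x ^ q ^ d = x → a ^ 2 * x ∈ U} D) :
    ∃ t r : ℕ,
      (paleyGraph (U : Set F)).cliqueNum = q ^ t + r ∧
      r + t ≤ Module.finrank K U ∧
      1 ≤ t ∧
      (t : ℝ) ≤ max (D : ℝ)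
        (7 / 8 * (Module.finrank K U : ℝ) + 7 / (32 * Real.logb 2 q)) ∧
      q ^ D ≤ (paleyGraph (U : Set F)).cliqueNum ∧
      ((paleyGraph (U : Set F)).cliqueNum : ℝ) ≤
        (q : ℝ) ^ (max (D : ℝ)
          (7 / 8 * (Module.finrank K U : ℝ) + 7 / (32 * Real.logb 2 q)))
        + Module.finrank K U := by
  subst hK
  have hq : 2 ≤ Fintype.card K := Fintype.one_lt_card
  have hn : finrank K F = n := Nat.pow_right_injective hq (card_eq_pow_finrank.symm.trans hF)
  obtain ⟨W, hWU, hs, r, hω, hr⟩ := exists_cliqueNum_eq_pow_finrank_add hbig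
  obtain ⟨hDn, hD1, -, a, ha, haU⟩ := hD.1
  have hqD := pow_le_cliqueNum_of_sq_mul_mem (by omega) (hn ▸ hDn) ha haU
  have hsD : 2 * finrank K U + 2 ≤ 3 * finrank K W → finrank K W ≤ D := fun h3 => by
    obtain ⟨E, hE, b, hb, hbU⟩ := exists_intermediateField_sq_mul_mem hWU hω hr h3
    refine hD.2 ⟨hn ▸ hE ▸ Dvd.intro _ (finrank_mul_finrank K E F), hs, by omega, b, hb,
      fun x hx => hbU x ?_⟩
    rwa [E.mem_iff_pow_card_pow_finrank_eq, hE]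
  have hlog := Real.logb_pos one_lt_two (by exact_mod_cast hq : (1 : ℝ) < Fintype.card K)
  have hκ := natCast_le_max_of_le_or_eight_mul_le (s := finrank K W) (D := D)
    (d := finrank K U) (by positivity : 0 ≤ 7 / (32 * Real.logb 2 (Fintype.card K)))
    (by by_cases h3 : 2 * finrank K U + 2 ≤ 3 * finrank K W <;> [exact .inl (hsD h3); omega])
  exact ⟨finrank K W, r, hω, by omega, hs, hκ, hqD,
    hω ▸ natCast_pow_add_le_rpow_add (by omega) hκ (by omega)⟩

/-- if `ω(G_U) > d_U + 2` and `D_U` is the greatest divisor `d` of `n` with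
`1 ≤ d ≤ d_U` such that `a² · F_{q^d} ⊆ U` for some `a ≠ 0` (the subfield `F_{q^d}` being
`{x | x^(q^d) = x}`), then `ω(G_U) = q^t + r` with `r + t ≤ d_U` and
`1 ≤ t ≤ κ_U = max {D_U, (7/8)d_U + 7/(32 log₂ q)}`; in particular
`q^{D_U} ≤ ω(G_U) ≤ q^{κ_U} + d_U`. -/
theorem omega_bounds_of_large (q n : ℕ) (hq : IsPrimePow q) (hn : 2 ≤ n)
    (K F : Type*) [Field K] [Field F] [Algebra K F] [Fintype K] [Fintype F]
    (hK : Fintype.card K = q) (hF : Fintype.card F = q ^ n)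
    (U : Submodule K F) (hU : U ≠ ⊤) (hd : 1 ≤ Module.finrank K U)
    (hbig : Module.finrank K U + 2 < (paleyGraph (U : Set F)).cliqueNum)
    (D : ℕ)
    (hD : IsGreatest {d : ℕ | d ∣ n ∧ 1 ≤ d ∧ d ≤ Module.finrank K U ∧
      ∃ a : F, a ≠ 0 ∧ ∀ x : F, x ^ q ^ d = x → a ^ 2 * x ∈ U} D) :
    ∃ t r : ℕ,
      (paleyGraph (U : Set F)).cliqueNum = q ^ t + r ∧
      r + t ≤ Module.finrank K U ∧
      1 ≤ t ∧
      (t : ℝ) ≤ max (D : ℝ)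
        (7 / 8 * (Module.finrank K U : ℝ) + 7 / (32 * Real.logb 2 q)) ∧
      q ^ D ≤ (paleyGraph (U : Set F)).cliqueNum ∧
      ((paleyGraph (U : Set F)).cliqueNum : ℝ) ≤
        (q : ℝ) ^ (max (D : ℝ)
          (7 / 8 * (Module.finrank K U : ℝ) + 7 / (32 * Real.logb 2 q)))
        + Module.finrank K U :=
  omega_bounds_of_large_general q n K F hK hF U hbig D hD
end

section
/- Let q be a prime power, n ≥ 2, and let U ⊊ F_{q^n} be an F_q-linear subspace of dimension d_U ≥ 2. Then either ω(G_U) = q^{d_U} or ω(G_U) ≤ q^{d_U−1} + 1. -/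
/-!
Let `s` be a clique with `|s| ≥ q^(d-1) + 2`. For a nonzero `a ∈ s` the other vertices lie in
the `d`-dimensional subspace `a⁻¹U`, and there are too many of them to lie in a hyperplane, so
they span it. If some nonzero `a ∈ s` lies in the span of the other vertices, then all the
`b⁻¹U` (`b ∈ s`, `b ≠ 0`) coincide with `span s`, which is then a clique of size `q^d`
containing `s`. Otherwise, removing two nonzero vertices `a, b` leaves exactly a
`(d-1)`-dimensional subspace `R`; a nonzero `c ∈ R` is the difference of two other elements
of `R` unless `|R| ≤ 2`, which forces `q = d = 2` and `|s| = 4 = q^d`.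
-/

open Finset Module Submodule

theorem SimpleGraph.IsClique.ncard_le_cliqueNum {α : Type*} [Finite α] {G : SimpleGraph α}
    {S : Set α} (h : G.IsClique S) : S.ncard ≤ G.cliqueNum := by
  obtain ⟨t, rfl⟩ := S.toFinite.exists_finset_coe
  rw [Set.ncard_coe_finset]
  exact h.card_le_cliqueNum

theorem pow_pred_add_two_eq_pow {q d : ℕ} (hq : 2 ≤ q) (hd : 2 ≤ d) (h : q ^ (d - 1) ≤ 2) :
    q ^ (d - 1) + 2 = q ^ d := by
  obtain rfl : q = 2 := by
    have := Nat.le_self_pow (by omega : d - 1 ≠ 0) q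
    omega
  have : d - 1 ≤ 1 := (Nat.pow_le_pow_iff_right (by norm_num : 1 < 2)).mp (by simpa using h)
  obtain rfl : d = 2 := by omega
  norm_num

section Span

variable {K V : Type*} [DivisionRing K] [AddCommGroup V] [Module K V]

theorem Finset.mem_span_erase_of_coe_submodule_subset [DecidableEq V] {s : Finset V}
    {R : Submodule K V} (hR : (R : Set V) ⊆ s) {c y : V} (hc : c ∈ R) (hy : y ∈ R)
    (hy0 : y ≠ 0) (hyc : y ≠ c) : c ∈ span K (s.erase c : Set V) := by
  have hmem : ∀ z ∈ R, z ≠ c → z ∈ span K (s.erase c : Set V) := fun z hz hzc =>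
    subset_span (mem_erase.mpr ⟨hzc, hR hz⟩)
  simpa using sub_mem (hmem (c + y) (add_mem hc hy) (by simpa using hy0)) (hmem y hy hyc)

variable [Finite K] [Finite V]

theorem Submodule.ncard_eq_pow_finrank (W : Submodule K V) :
    (W : Set V).ncard = Nat.card K ^ finrank K W := by
  rw [← Nat.card_coe_set_eq, SetLike.coe_sort_coe, Module.natCard_eq_pow_finrank (K := K)]

theorem Finset.card_le_pow_finrank {t : Finset V} {W : Submodule K V} (h : ↑t ⊆ (W : Set V)) :
    #t ≤ Nat.card K ^ finrank K W := by
  rw [← W.ncard_eq_pow_finrank, ← Set.ncard_coe_finset]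
  exact Set.ncard_le_ncard h

theorem Finset.coe_eq_of_subset_of_pow_finrank_le {t : Finset V} {W : Submodule K V}
    (h : ↑t ⊆ (W : Set V)) (hcard : Nat.card K ^ finrank K W ≤ #t) : (t : Set V) = W :=
  Set.eq_of_subset_of_ncard_le h (by rwa [W.ncard_eq_pow_finrank, Set.ncard_coe_finset])

theorem Finset.lt_finrank_span_of_pow_lt_card {t : Finset V} {k : ℕ}
    (h : Nat.card K ^ k < #t) : k < finrank K (span K (t : Set V)) :=
  (Nat.pow_lt_pow_iff_right Finite.one_lt_card).mp
    (h.trans_le (card_le_pow_finrank subset_span))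

end Span

section MulPreimage

variable {K F : Type*} [Field K] [Field F] [Algebra K F]

/-- The subspace `a⁻¹U` of the paper when `a ≠ 0` (and `⊤` when `a = 0`). -/
def mulPreimage (U : Submodule K F) (a : F) : Submodule K F :=
  U.comap (LinearMap.mulLeft K a)

@[simp]
theorem mem_mulPreimage {U : Submodule K F} {a x : F} : x ∈ mulPreimage U a ↔ a * x ∈ U :=
  Iff.rfl

theorem finrank_mulPreimage (U : Submodule K F) {a : F} (ha : a ≠ 0) :
    finrank K (mulPreimage U a) = finrank K U := by
  have : LinearMap.mulLeft K a = ((Units.mk0 a ha).mulLeftLinearEquiv K F : F →ₗ[K] F) := rfl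
  rw [mulPreimage, this, comap_equiv_eq_map_symm, LinearEquiv.finrank_map_eq]

end MulPreimage

section Clique

variable {K F : Type*} [Field K] [Field F] [Algebra K F] {U : Submodule K F} {s : Finset F}

theorem isClique_span_of_mulPreimage_eq
    (h : ∀ b ∈ s, b ≠ 0 → mulPreimage U b = span K (s : Set F)) :
    (paleyGraph (U : Set F)).IsClique (span K (s : Set F) : Set F) := by
  intro x hx y hy hxy
  refine ⟨hxy, ?_⟩
  have hspan : span K (s : Set F) ≤ mulPreimage U x := span_le.mpr fun z hz => by
    rcases eq_or_ne z 0 with rfl | hz0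
    · simp
    · have : z * x ∈ U := by rw [← mem_mulPreimage, h z hz hz0]; exact hx
      rwa [SetLike.mem_coe, mem_mulPreimage, mul_comm]
  exact hspan hy

variable [DecidableEq F]

theorem coe_erase_subset_mulPreimage (hs : (paleyGraph (U : Set F)).IsClique (s : Set F))
    {a : F} (ha : a ∈ s) : (s.erase a : Set F) ⊆ mulPreimage U a := fun _ hx =>
  (hs ha (mem_of_mem_erase hx) (ne_of_mem_erase hx).symm).2

variable [Finite K] [Finite F]

theorem span_erase_eq_mulPreimage (hs : (paleyGraph (U : Set F)).IsClique (s : Set F))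
    {a : F} (ha : a ∈ s) (ha0 : a ≠ 0)
    (hcard : Nat.card K ^ (finrank K U - 1) < #(s.erase a)) :
    span K (s.erase a : Set F) = mulPreimage U a := by
  refine eq_of_le_of_finrank_le (span_le.mpr (coe_erase_subset_mulPreimage hs ha)) ?_
  have := lt_finrank_span_of_pow_lt_card hcard
  rw [finrank_mulPreimage U ha0]
  omega

theorem mulPreimage_eq_span_of_mem_span_erase
    (hs : (paleyGraph (U : Set F)).IsClique (s : Set F))
    (hcard : Nat.card K ^ (finrank K U - 1) + 1 < #s) {a : F} (ha : a ∈ s) (ha0 : a ≠ 0)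
    (haspan : a ∈ span K (s.erase a : Set F)) {b : F} (hb : b ∈ s) (hb0 : b ≠ 0) :
    mulPreimage U b = span K (s : Set F) := by
  have hcard' : ∀ c ∈ s, Nat.card K ^ (finrank K U - 1) < #(s.erase c) := fun c hc => by
    rw [card_erase_of_mem hc]; omega
  have hspan_s : span K (s : Set F) = mulPreimage U a := by
    rw [← insert_erase ha, coe_insert, span_insert_eq_span haspan,
      span_erase_eq_mulPreimage hs ha ha0 (hcard' a ha)]
  rw [← span_erase_eq_mulPreimage hs hb hb0 (hcard' b hb)]
  refine eq_of_le_of_finrank_le (span_mono (coe_subset.mpr (erase_subset b s))) ?_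
  rw [hspan_s, span_erase_eq_mulPreimage hs hb hb0 (hcard' b hb), finrank_mulPreimage U ha0,
    finrank_mulPreimage U hb0]

theorem card_eq_and_pow_le_two_of_forall_notMem_span_erase
    (hs : (paleyGraph (U : Set F)).IsClique (s : Set F))
    (hcard : Nat.card K ^ (finrank K U - 1) + 2 ≤ #s)
    (hind : ∀ a ∈ s, a ≠ 0 → a ∉ span K (s.erase a : Set F)) :
    #s = Nat.card K ^ (finrank K U - 1) + 2 ∧ Nat.card K ^ (finrank K U - 1) ≤ 2 := by
  have hpos : 0 < Nat.card K ^ (finrank K U - 1) := pow_pos Finite.card_pos _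
  obtain ⟨a, ha, b, hb, hab⟩ := one_lt_card.mp
    (by have := pred_card_le_card_erase (s := s) (a := 0); omega : 1 < #(s.erase 0))
  obtain ⟨ha0, ha⟩ := mem_erase.mp ha
  obtain ⟨hb0, hb⟩ := mem_erase.mp hb
  have hba : b ∈ s.erase a := mem_erase.mpr ⟨hab.symm, hb⟩
  set t := (s.erase a).erase b with ht
  set R := span K (t : Set F)
  have hts : t ⊆ s := (erase_subset b _).trans (erase_subset a s)
  have htcard : #t + 2 = #s := by
    rw [ht, card_erase_of_mem hba, card_erase_of_mem ha]; omega
  have hbR : b ∉ R := fun h => hind b hb hb0 <|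
    span_mono (coe_subset.mpr ((erase_right_comm (s := s)).subset.trans (erase_subset a _))) h
  have hR : finrank K R = finrank K U - 1 := by
    have hsa : span K (s.erase a : Set F) = R ⊔ K ∙ b := by
      rw [← insert_erase hba, coe_insert, span_insert, sup_comm]
    have := finrank_sup_span_singleton hbR
    rw [← hsa, span_erase_eq_mulPreimage hs ha ha0 (by rw [card_erase_of_mem ha]; omega),
      finrank_mulPreimage U ha0] at this
    omega
  have htR : (t : Set F) = R :=
    coe_eq_of_subset_of_pow_finrank_le subset_span (by rw [hR]; omega)
  have htle : #t ≤ Nat.card K ^ (finrank K U - 1) := hR ▸ card_le_pow_finrank htR.le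
  refine ⟨by omega, ?_⟩
  by_contra! hbig
  obtain ⟨c, hc, y, hy, hyc⟩ := one_lt_card.mp
    (by have := pred_card_le_card_erase (s := t) (a := 0); omega : 1 < #(t.erase 0))
  obtain ⟨hc0, hc⟩ := mem_erase.mp hc
  obtain ⟨hy0, hy⟩ := mem_erase.mp hy
  have hRs : (R : Set F) ⊆ s := htR ▸ coe_subset.mpr hts
  exact hind c (hts hc) hc0 <| mem_span_erase_of_coe_submodule_subset hRs
    (htR ▸ hc : c ∈ (R : Set F)) (htR ▸ hy : y ∈ (R : Set F)) hy0 hyc.symm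

theorem exists_isClique_submodule_or_card_eq
    (hs : (paleyGraph (U : Set F)).IsClique (s : Set F))
    (hcard : Nat.card K ^ (finrank K U - 1) + 2 ≤ #s) :
    (∃ W : Submodule K F, finrank K W = finrank K U ∧ (s : Set F) ⊆ W ∧
      (paleyGraph (U : Set F)).IsClique (W : Set F)) ∨
    (#s = Nat.card K ^ (finrank K U - 1) + 2 ∧ Nat.card K ^ (finrank K U - 1) ≤ 2) := by
  by_cases h : ∃ a ∈ s, a ≠ 0 ∧ a ∈ span K (s.erase a : Set F)
  · obtain ⟨a, ha, ha0, haspan⟩ := h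
    have hW : ∀ b ∈ s, b ≠ 0 → mulPreimage U b = span K (s : Set F) := fun b hb hb0 =>
      mulPreimage_eq_span_of_mem_span_erase hs (by omega) ha ha0 haspan hb hb0
    refine Or.inl ⟨_, ?_, subset_span, isClique_span_of_mulPreimage_eq hW⟩
    rw [← hW a ha ha0, finrank_mulPreimage U ha0]
  · push Not at h
    exact Or.inr (card_eq_and_pow_le_two_of_forall_notMem_span_erase hs hcard h)

end Clique

theorem omega_dichotomy_general (q : ℕ)
    (K F : Type*) [Field K] [Field F] [Algebra K F] [Fintype K] [Fintype F]
    (hK : Fintype.card K = q)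
    (U : Submodule K F) (hd : 2 ≤ Module.finrank K U) :
    (paleyGraph (U : Set F)).cliqueNum = q ^ Module.finrank K U ∨
    (paleyGraph (U : Set F)).cliqueNum ≤ q ^ (Module.finrank K U - 1) + 1 := by
  classical
  rw [← Nat.card_eq_fintype_card] at hK
  subst hK
  obtain ⟨s, hs⟩ := (paleyGraph (U : Set F)).exists_isNClique_cliqueNum
  rw [← hs.card_eq]
  refine (le_or_gt #s _).symm.imp (fun hbig => ?_) id
  rcases exists_isClique_submodule_or_card_eq hs.isClique hbig with
    ⟨W, hW, hsW, hWclique⟩ | ⟨hcard, hsmall⟩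
  · refine le_antisymm (hW ▸ card_le_pow_finrank hsW) ?_
    rw [← hW, ← W.ncard_eq_pow_finrank, hs.card_eq]
    exact hWclique.ncard_le_cliqueNum
  · rw [hcard, pow_pred_add_two_eq_pow Finite.one_lt_card hd hsmall]

/-- for `d_U ≥ 2`, either `ω(G_U) = q^{d_U}` or `ω(G_U) ≤ q^{d_U - 1} + 1`. -/
theorem omega_dichotomy (q n : ℕ) (hq : IsPrimePow q) (hn : 2 ≤ n)
    (K F : Type*) [Field K] [Field F] [Algebra K F] [Fintype K] [Fintype F]
    (hK : Fintype.card K = q) (hF : Fintype.card F = q ^ n)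
    (U : Submodule K F) (hU : U ≠ ⊤) (hd : 2 ≤ Module.finrank K U) :
    (paleyGraph (U : Set F)).cliqueNum = q ^ Module.finrank K U ∨
    (paleyGraph (U : Set F)).cliqueNum ≤ q ^ (Module.finrank K U - 1) + 1 :=
  omega_dichotomy_general q K F hK U hd
end

section
/- Let q be an even prime power (i.e., F_q has characteristic 2), n ≥ 2, and let B be a nondegenerate symmetric F_q-bilinear form on F_{q^n} (viewed as an n-dimensional F_q-vector space). Let t(B) be the largest dimension of an F_q-subspace W ⊆ F_{q^n} with B(u, w) = 0 for all u, w ∈ W. If q > 2 or t(B) ≥ 3, then every set E ⊆ F_{q^n} such that B(u, w) = 0 for all u, w ∈ E with u ≠ w satisfies |E| ≤ q^{t(B)} + n − 2·t(B); moreover t(B) ≤ n/2. -/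
/-!
Split a pairwise orthogonal set `E` into its isotropic part `E₀` and its anisotropic part `E₁`.
Since distinct elements are orthogonal, `E₀` spans a totally isotropic subspace `U`, of dimension
`d ≤ t`, so `|E₀| ≤ q ^ d`; and `E₁` is an orthogonal basis of a nondegenerate subspace `W` of
dimension `m = |E₁|`. As `U ⊥ W` and `U ∩ W = 0`, the space `U + W` lies in `U^⊥`, whence
`2d + m ≤ n` and `|E| ≤ q ^ d + n - 2d`. Finally `x ↦ q ^ x - 2x` does not decrease from `d` to `t`
unless `q = 2` and `t ≤ 2`.
-/

open Module Submodule LinearMap.BilinForm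

theorem pow_add_two_mul_le_pow_add {q d : ℕ} (hq : 2 ≤ q) (hdq : 1 ≤ d ∨ 3 ≤ q) (k : ℕ) :
    q ^ d + 2 * k ≤ q ^ (d + k) := by
  have bernoulli : 1 + (k : ℤ) * (q - 1) ≤ (q : ℤ) ^ k := by
    simpa using one_add_mul_le_pow (a := (q : ℤ) - 1) (by omega) k
  have hqd : (2 : ℤ) ≤ (q : ℤ) ^ d * (q - 1) := by
    rcases hdq with hd | hq3
    · nlinarith [pow_le_pow_right₀ (show (1 : ℤ) ≤ q by omega) hd]
    · nlinarith [one_le_pow₀ (show (1 : ℤ) ≤ q by omega) (n := d)]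
  zify
  rw [pow_add]
  nlinarith [pow_nonneg (Int.natCast_nonneg q) d, Int.natCast_nonneg k]

theorem pow_add_two_mul_le {q d t : ℕ} (hq : 2 ≤ q) (hdt : d ≤ t) (h : 2 < q ∨ 3 ≤ t) :
    q ^ d + 2 * t ≤ q ^ t + 2 * d := by
  obtain ⟨k, rfl⟩ := Nat.exists_eq_add_of_le hdt
  by_cases hdq : 1 ≤ d ∨ 3 ≤ q
  · have := pow_add_two_mul_le_pow_add hq hdq k
    omega
  · obtain ⟨rfl, rfl⟩ : d = 0 ∧ q = 2 := by omega
    obtain ⟨j, rfl⟩ : ∃ j, k = 3 + j := ⟨k - 3, by omega⟩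
    -- `2 ^ x - 2x` is `1` at `x = 0` but `2` at `x = 3`, and increases from there on.
    have := pow_add_two_mul_le_pow_add le_rfl (Or.inl (by norm_num : 1 ≤ 3)) j
    simp only [zero_add] at this ⊢
    omega

theorem Finset.card_le_card_pow_finrank {K V : Type*} [Field K] [Fintype K] [AddCommGroup V]
    [Module K V] [Finite V] {s : Finset V} {U : Submodule K V} (hs : (s : Set V) ⊆ U) :
    s.card ≤ Fintype.card K ^ finrank K U := by
  rw [← Set.ncard_coe_finset, Fintype.card_eq_nat_card, ← Module.natCard_eq_pow_finrank,
    ← Nat.card_coe_set_eq]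
  exact Set.ncard_le_ncard hs (Set.toFinite _)

theorem LinearMap.apply_eq_zero_of_mem_span {R M N P : Type*} [CommSemiring R]
    [AddCommMonoid M] [AddCommMonoid N] [AddCommMonoid P] [Module R M] [Module R N] [Module R P]
    (B : M →ₗ[R] N →ₗ[R] P) {s : Set M} {t : Set N} (h : ∀ u ∈ s, ∀ w ∈ t, B u w = 0)
    {u : M} {w : N} (hu : u ∈ span R s) (hw : w ∈ span R t) : B u w = 0 := by
  have hs : ∀ w ∈ t, span R s ≤ LinearMap.ker (B.flip w) :=
    fun w hw => span_le.2 fun u hu => h u hu w hw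
  exact (span_le (p := LinearMap.ker (B u)).2 fun w hw => hs w hw hu) hw

namespace LinearMap.BilinForm

theorem disjoint_orthogonal_of_restrict_nondegenerate {R M : Type*} [CommSemiring R]
    [AddCommMonoid M] [Module R M] {B : LinearMap.BilinForm R M} {W : Submodule R M}
    (hW : (B.restrict W).Nondegenerate) : Disjoint W (B.orthogonal W) := by
  rw [Submodule.disjoint_def]
  intro x hxW hxO
  simpa using hW.2 ⟨x, hxW⟩ fun n => hxO n n.2

variable {K V : Type*} [Field K] [AddCommGroup V] [Module K V] {B : LinearMap.BilinForm K V}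

theorem linearIndependent_of_pairwise {s : Set V} (hs : s.Pairwise fun u w => B u w = 0)
    (hs₀ : ∀ x ∈ s, B x x ≠ 0) : LinearIndependent K ((↑) : s → V) :=
  linearIndependent_of_iIsOrtho (fun i j hij => hs i.2 j.2 (Subtype.coe_ne_coe.2 hij))
    fun i => hs₀ i i.2

theorem disjoint_span_orthogonal_span {s : Set V} (hs : s.Pairwise fun u w => B u w = 0)
    (hs₀ : ∀ x ∈ s, B x x ≠ 0) : Disjoint (span K s) (B.orthogonal (span K s)) := by
  have hli := linearIndependent_of_pairwise hs hs₀
  have := (iIsOrtho.nondegenerate_iff_not_isOrtho_basis_self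
    (B.restrict (span K (Set.range ((↑) : s → V)))) (Basis.span hli) ?_).2 ?_
  · simpa using disjoint_orthogonal_of_restrict_nondegenerate this
  · intro i j hij
    simpa [Function.onFun] using hs i.2 j.2 (Subtype.coe_ne_coe.2 hij)
  · intro i
    simpa using hs₀ i i.2

theorem two_mul_finrank_add_finrank_le [FiniteDimensional K V] (hB : B.Nondegenerate)
    (hB₀ : B.IsRefl) {U W : Submodule K V} (hU : U ≤ B.orthogonal U)
    (hW : Disjoint W (B.orthogonal W)) (hUW : U ≤ B.orthogonal W) :
    2 * finrank K U + finrank K W ≤ finrank K V := by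
  have hsup : U ⊔ W ≤ B.orthogonal U := sup_le hU fun w hw u hu => hB₀ _ _ (hUW hu w hw)
  have hinf : U ⊓ W = ⊥ := disjoint_iff.1 (hW.symm.mono_left hUW)
  have := finrank_sup_add_finrank_inf_eq U W
  have := finrank_mono hsup
  have := finrank_orthogonal hB U
  have := finrank_le U
  rw [hinf, finrank_bot] at *
  omega

theorem exists_card_add_two_mul_finrank_le [Fintype K] [Finite V] (hB : B.Nondegenerate)
    (hB₀ : B.IsRefl) (E : Finset V) (hE : (E : Set V).Pairwise fun u w => B u w = 0) :
    ∃ U : Submodule K V, U ≤ B.orthogonal U ∧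
      E.card + 2 * finrank K U ≤ Fintype.card K ^ finrank K U + finrank K V := by
  classical
  set E₀ := E.filter fun x => B x x = 0
  set E₁ := E.filter fun x => B x x ≠ 0
  have hsplit : E₀.card + E₁.card = E.card := Finset.card_filter_add_card_filter_not _
  have hE₀ : ∀ u ∈ (E₀ : Set V), ∀ w ∈ (E₀ : Set V), B u w = 0 := by
    intro u hu w hw
    simp only [E₀, Finset.mem_coe, Finset.mem_filter] at hu hw
    rcases eq_or_ne u w with rfl | huw
    · exact hu.2
    · exact hE hu.1 hw.1 huw
  have hE₁E₀ : ∀ w ∈ (E₁ : Set V), ∀ u ∈ (E₀ : Set V), B w u = 0 := by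
    intro w hw u hu
    simp only [E₀, E₁, Finset.mem_coe, Finset.mem_filter] at hu hw
    exact hE hw.1 hu.1 fun h => hw.2 (h ▸ hu.2)
  have hE₁ : (E₁ : Set V).Pairwise fun u w => B u w = 0 :=
    hE.mono (Finset.coe_subset.2 (Finset.filter_subset _ _))
  have hE₁anis : ∀ x ∈ (E₁ : Set V), B x x ≠ 0 := fun x hx => (Finset.mem_filter.1 hx).2
  set U := span K (E₀ : Set V)
  set W := span K (E₁ : Set V)
  have hU : U ≤ B.orthogonal U := fun u hu w hw => B.apply_eq_zero_of_mem_span hE₀ hw hu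
  have hUW : U ≤ B.orthogonal W := fun u hu w hw => B.apply_eq_zero_of_mem_span hE₁E₀ hw hu
  have hW : finrank K W = E₁.card :=
    finrank_span_finset_eq_card (linearIndependent_of_pairwise hE₁ hE₁anis)
  have hE₀card : E₀.card ≤ Fintype.card K ^ finrank K U :=
    Finset.card_le_card_pow_finrank subset_span
  have hdim : 2 * finrank K U + finrank K W ≤ finrank K V :=
    two_mul_finrank_add_finrank_le hB hB₀ hU (disjoint_span_orthogonal_span hE₁ hE₁anis) hUW
  exact ⟨U, hU, by omega⟩

end LinearMap.BilinForm

theorem pairwise_orthogonal_card_le_char_two_general (q n : ℕ)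
    (K F : Type*) [Field K] [Field F] [Algebra K F] [Fintype K] [Fintype F]
    (hK : Fintype.card K = q) (hF : Fintype.card F = q ^ n)
    (B : F →ₗ[K] F →ₗ[K] K)
    (hsymm : ∀ x y : F, B x y = B y x)
    (hnd : ∀ x : F, (∀ y : F, B x y = 0) → x = 0)
    (t : ℕ)
    (ht : IsGreatest {d : ℕ | ∃ W : Submodule K F, Module.finrank K W = d ∧
      ∀ u ∈ W, ∀ w ∈ W, B u w = 0} t)
    (h : 2 < q ∨ 3 ≤ t) :
    (∀ E : Finset F, (∀ u ∈ E, ∀ w ∈ E, u ≠ w → B u w = 0) →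
      E.card ≤ q ^ t + n - 2 * t) ∧
    2 * t ≤ n := by
  have hB₀ : B.IsRefl := fun x y hxy => hsymm x y ▸ hxy
  have hB : B.Nondegenerate := hB₀.nondegenerate_iff_separatingLeft.2 hnd
  have hq : 2 ≤ q := hK ▸ Fintype.one_lt_card
  have hn : Module.finrank K F = n := by
    have hcard := Module.card_eq_pow_finrank (K := K) (V := F)
    rw [hK, hF] at hcard
    exact Nat.pow_right_injective hq hcard.symm
  have hiso (U : Submodule K F) (hU : U ≤ orthogonal B U) : Module.finrank K U ≤ t :=
    ht.2 ⟨U, rfl, fun u hu w hw => hU hw u hu⟩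
  refine ⟨fun E hE => ?_, ?_⟩
  · obtain ⟨U, hU, hEU⟩ := exists_card_add_two_mul_finrank_le hB hB₀ E hE
    have := pow_add_two_mul_le hq (hiso U hU) h
    rw [hK, hn] at hEU
    omega
  · obtain ⟨W, rfl, hW⟩ := ht.1
    simpa [hn] using two_mul_finrank_add_finrank_le hB hB₀ (W := ⊥)
      (fun w hw u hu => hW u hu w hw) disjoint_bot_left (by simp)

/-- let `q` be an even prime power, `B` a nondegenerate symmetric
`F_q`-bilinear form on `F_{q^n}`, and `t(B)` the largest dimension of a totally
`B`-isotropic `F_q`-subspace. If `q > 2` or `t(B) ≥ 3`, then every pairwise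
`B`-orthogonal set `E ⊆ F_{q^n}` satisfies `|E| ≤ q^{t(B)} + n - 2 t(B)`; moreover
`t(B) ≤ n / 2`. -/
theorem pairwise_orthogonal_card_le_char_two (q n : ℕ)
    (hq : IsPrimePow q) (hqeven : Even q) (hn : 2 ≤ n)
    (K F : Type*) [Field K] [Field F] [Algebra K F] [Fintype K] [Fintype F]
    (hK : Fintype.card K = q) (hF : Fintype.card F = q ^ n)
    (B : F →ₗ[K] F →ₗ[K] K)
    (hsymm : ∀ x y : F, B x y = B y x)
    (hnd : ∀ x : F, (∀ y : F, B x y = 0) → x = 0)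
    (t : ℕ)
    (ht : IsGreatest {d : ℕ | ∃ W : Submodule K F, Module.finrank K W = d ∧
      ∀ u ∈ W, ∀ w ∈ W, B u w = 0} t)
    (h : 2 < q ∨ 3 ≤ t) :
    (∀ E : Finset F, (∀ u ∈ E, ∀ w ∈ E, u ≠ w → B u w = 0) →
      E.card ≤ q ^ t + n - 2 * t) ∧
    2 * t ≤ n :=
  pairwise_orthogonal_card_le_char_two_general q n K F hK hF B hsymm hnd t ht h
end

section
/- Let q be a prime power and n ≥ 2 such that q is even or q·n is odd, and let U ⊊ F_{q^n} be an F_q-linear subspace of dimension n − 1. Then there exists a ∈ F_{q^n}, a ≠ 0, such that U = a²·U_{q,n} = {a²x : x ∈ F_{q^n}, Tr_n(x) = 0}, and the graphs G_U and G_{U_{q,n}} are isomorphic. -/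
open Module

theorem Submodule.exists_dual_ker_eq_of_finrank_add_one {K V : Type*} [Field K] [AddCommGroup V]
    [Module K V] [FiniteDimensional K V] {U : Submodule K V}
    (hU : finrank K U + 1 = finrank K V) : ∃ f : Dual K V, LinearMap.ker f = U := by
  have hlt : U < ⊤ := Submodule.lt_top_of_finrank_lt_finrank (by omega)
  obtain ⟨f, hf, hUf⟩ := U.exists_dual_map_eq_bot_of_lt_top hlt inferInstance
  refine ⟨f, (Submodule.eq_of_le_of_finrank_eq (LinearMap.le_ker_iff_map.mpr hUf) ?_).symm⟩
  have := Dual.finrank_ker_add_one_of_ne_zero hf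
  omega

theorem Set.mem_image_mul_left_iff₀ {G : Type*} [GroupWithZero G] {S : Set G} {c x : G}
    (hc : c ≠ 0) : x ∈ (c * ·) '' S ↔ c⁻¹ * x ∈ S :=
  Set.mem_smul_set_iff_inv_smul_mem₀ hc S x

theorem isSquare_of_isSquare_pow_of_odd {F : Type*} [Field F] {a : F} {n : ℕ} (hn : Odd n)
    (h : IsSquare (a ^ n)) : IsSquare a := by
  obtain ⟨k, rfl⟩ := hn
  rcases eq_or_ne a 0 with rfl | ha
  · exact IsSquare.zero
  have : a = a ^ (2 * k + 1) * (a ^ k)⁻¹ ^ 2 := by field_simp; ring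
  rw [this]
  exact h.mul (IsSquare.sq _)

theorem not_isSquare_algebraMap_of_odd_finrank {K F : Type*} [Field K] [Field F] [Algebra K F]
    (hodd : Odd (finrank K F)) {l : K} (hl : ¬IsSquare l) : ¬IsSquare (algebraMap K F l) := by
  rintro ⟨s, hs⟩
  refine hl (isSquare_of_isSquare_pow_of_odd hodd ⟨Algebra.norm K s, ?_⟩)
  rw [← Algebra.norm_algebraMap, hs, map_mul]

theorem isSquare_mul_of_not_isSquare {F : Type*} [Field F] [Fintype F] [DecidableEq F]
    {a b : F} (ha : ¬IsSquare a) (hb : ¬IsSquare b) : IsSquare (a * b) := by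
  have ha0 : a ≠ 0 := by rintro rfl; exact ha IsSquare.zero
  have hb0 : b ≠ 0 := by rintro rfl; exact hb IsSquare.zero
  rw [← quadraticChar_one_iff_isSquare (mul_ne_zero ha0 hb0), map_mul,
    quadraticChar_neg_one_iff_not_isSquare.mpr ha, quadraticChar_neg_one_iff_not_isSquare.mpr hb]
  norm_num

namespace FiniteField

theorem setOf_sum_pow_eq_zero_eq_ker_trace (K F : Type*) [Field K] [Field F] [Algebra K F]
    [Finite F] :
    {x : F | ∑ i ∈ Finset.range (finrank K F), x ^ Nat.card K ^ i = 0} =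
      {x | Algebra.trace K F x = 0} := by
  ext x
  rw [Set.mem_ofPred_eq, Set.mem_ofPred_eq, ← algebraMap_trace_eq_sum_pow,
    FaithfulSMul.algebraMap_eq_zero_iff]

variable {K F : Type*} [Field K] [Field F] [Algebra K F] [Fintype F]

theorem exists_ker_trace_mul_eq {U : Submodule K F}
    (hU : finrank K U + 1 = finrank K F) :
    ∃ c : F, c ≠ 0 ∧ ∀ x, x ∈ U ↔ Algebra.trace K F (c * x) = 0 := by
  obtain ⟨f, rfl⟩ := Submodule.exists_dual_ker_eq_of_finrank_add_one hU
  set c := (LinearMap.BilinForm.toDual _ (traceForm_nondegenerate K F)).symm f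
  have hf : ∀ x, f x = Algebra.trace K F (c * x) := fun x => by
    rw [← Algebra.traceForm_apply, ← LinearMap.BilinForm.toDual_def (traceForm_nondegenerate K F),
      LinearEquiv.apply_symm_apply]
  refine ⟨c, fun hc => ?_, fun x => by rw [LinearMap.mem_ker, hf]⟩
  have hker : LinearMap.ker f = ⊤ := by
    ext x
    simp [hf, hc]
  rw [hker, finrank_top] at hU
  omega

theorem exists_isSquare_algebraMap_mul [Fintype K] (h : ringChar K = 2 ∨ Odd (finrank K F))
    (c : F) : ∃ l : K, l ≠ 0 ∧ IsSquare (algebraMap K F l * c) := by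
  by_cases hc : IsSquare c
  · exact ⟨1, one_ne_zero, by rwa [map_one, one_mul]⟩
  have hK2 : ringChar K ≠ 2 := fun h2 =>
    hc (isSquare_of_char_two ((Algebra.ringChar_eq K F).symm.trans h2) c)
  obtain ⟨l, hl⟩ := exists_nonsquare hK2
  refine ⟨l, by rintro rfl; exact hl IsSquare.zero, ?_⟩
  classical
  exact isSquare_mul_of_not_isSquare
    (not_isSquare_algebraMap_of_odd_finrank (h.resolve_left hK2) hl) hc

theorem exists_eq_image_sq_mul_ker_trace [Fintype K] {U : Submodule K F}
    (hU : finrank K U + 1 = finrank K F) (h : ringChar K = 2 ∨ Odd (finrank K F)) :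
    ∃ a : F, a ≠ 0 ∧ (U : Set F) = (a ^ 2 * ·) '' {x | Algebra.trace K F x = 0} := by
  obtain ⟨c, hc, hUc⟩ := exists_ker_trace_mul_eq hU
  obtain ⟨l, hl, a, ha⟩ := exists_isSquare_algebraMap_mul h c⁻¹
  have ha0 : a ≠ 0 := by
    rintro rfl
    simp [hl, hc] at ha
  have hca : c = algebraMap K F l * (a ^ 2)⁻¹ := by
    have hl' : algebraMap K F l ≠ 0 := (map_ne_zero _).mpr hl
    rw [sq, ← ha]
    field_simp
  refine ⟨a, ha0, Set.ext fun x => ?_⟩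
  rw [SetLike.mem_coe, hUc, Set.mem_image_mul_left_iff₀ (pow_ne_zero 2 ha0), Set.mem_ofPred_eq,
    hca, mul_assoc, ← Algebra.smul_def, map_smul, smul_eq_zero, or_iff_right hl]

end FiniteField

def paleyGraphImageSqMulIso {F : Type*} [Field F] (S : Set F) {a : F} (ha : a ≠ 0) :
    paleyGraph ((a ^ 2 * ·) '' S) ≃g paleyGraph S where
  toEquiv := Equiv.mulLeft₀ a⁻¹ (inv_ne_zero ha)
  map_rel_iff' {x y} := by
    have hxy : a⁻¹ * x * (a⁻¹ * y) = (a ^ 2)⁻¹ * (x * y) := by ring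
    change a⁻¹ * x ≠ a⁻¹ * y ∧ a⁻¹ * x * (a⁻¹ * y) ∈ S ↔ x ≠ y ∧ _
    rw [hxy, Set.mem_image_mul_left_iff₀ (pow_ne_zero 2 ha),
      (mul_right_injective₀ (inv_ne_zero ha)).ne_iff]

theorem hyperplane_is_square_multiple_of_trace_kernel_general (q n : ℕ)
    (hpar : Even q ∨ Odd (q * n))
    (K F : Type*) [Field K] [Field F] [Algebra K F] [Fintype K] [Fintype F]
    (hK : Fintype.card K = q) (hF : Fintype.card F = q ^ n)
    (U : Submodule K F) (hd : Module.finrank K U = n - 1) :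
    ∃ a : F, a ≠ 0 ∧
      (U : Set F) = (fun x => a ^ 2 * x) ''
        {x : F | ∑ i ∈ Finset.range n, x ^ q ^ i = 0} ∧
      Nonempty ((paleyGraph (U : Set F)) ≃g
        (paleyGraph {x : F | ∑ i ∈ Finset.range n, x ^ q ^ i = 0})) := by
  subst hK
  obtain rfl : finrank K F = n :=
    Nat.pow_right_injective Fintype.one_lt_card (card_eq_pow_finrank.symm.trans hF)
  have hcodim : finrank K U + 1 = finrank K F := by
    have := finrank_pos (R := K) (M := F)
    omega
  have hchar : ringChar K = 2 ∨ Odd (finrank K F) :=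
    hpar.imp (fun h => FiniteField.even_card_iff_char_two.mpr (Nat.even_iff.mp h))
      (fun h => (Nat.odd_mul.mp h).2)
  obtain ⟨a, ha, hUa⟩ := FiniteField.exists_eq_image_sq_mul_ker_trace hcodim hchar
  rw [Fintype.card_eq_nat_card, FiniteField.setOf_sum_pow_eq_zero_eq_ker_trace]
  exact ⟨a, ha, hUa, ⟨hUa ▸ paleyGraphImageSqMulIso _ ha⟩⟩

/-- if `q` is even or `q·n` is odd and `U ⊊ F_{q^n}` is an `F_q`-subspace of
dimension `n - 1`, then `U = a² · U_{q,n}` for some `a ≠ 0`, where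
`U_{q,n} = {x | Tr_n(x) = 0}` with `Tr_n(x) = ∑_{i<n} x^(q^i)`, and the graphs `G_U` and
`G_{U_{q,n}}` are isomorphic. -/
theorem hyperplane_is_square_multiple_of_trace_kernel (q n : ℕ)
    (hq : IsPrimePow q) (hn : 2 ≤ n) (hpar : Even q ∨ Odd (q * n))
    (K F : Type*) [Field K] [Field F] [Algebra K F] [Fintype K] [Fintype F]
    (hK : Fintype.card K = q) (hF : Fintype.card F = q ^ n)
    (U : Submodule K F) (hU : U ≠ ⊤) (hd : Module.finrank K U = n - 1) :
    ∃ a : F, a ≠ 0 ∧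
      (U : Set F) = (fun x => a ^ 2 * x) ''
        {x : F | ∑ i ∈ Finset.range n, x ^ q ^ i = 0} ∧
      Nonempty ((paleyGraph (U : Set F)) ≃g
        (paleyGraph {x : F | ∑ i ∈ Finset.range n, x ^ q ^ i = 0})) :=
  hyperplane_is_square_multiple_of_trace_kernel_general q n hpar K F hK hF U hd
end
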